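/- If G and H are groups each having Grossman's Property A, then the direct product G × H has Grossman's Property A. -/

import Mathlib

/-- A group `G` has Grossman's Property A if every class-preserving automorphism
(i.e. one sending each element to a conjugate of itself) is inner. -/
def HasPropertyA (G : Type*) [Group G] : Prop :=
  ∀ φ : G ≃* G, (∀ g : G, IsConj g (φ g)) → ∃ h : G, ∀ g : G, φ g = h * g * h⁻¹

/-!
Conjugates of `(g, 1)` in `G × H` again have trivial second coordinate, so a class-preserving
automorphism `φ` of `G × H` maps each factor onto itself. Hence `φ` is the product of its
restrictions to the factors; these are class-preserving, hence inner, say by `a` and `b`, and then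
`φ` is conjugation by `(a, b)`.
-/

def MulEquiv.IsClassPreserving {G : Type*} [Group G] (φ : G ≃* G) : Prop :=
  ∀ g, IsConj g (φ g)

namespace MulEquiv.IsClassPreserving

variable {G H : Type*} [Group G] [Group H]

theorem symm {φ : G ≃* G} (hφ : φ.IsClassPreserving) : φ.symm.IsClassPreserving := fun g => by
  simpa using (hφ (φ.symm g)).symm

theorem prodComm_conj {φ : (G × H) ≃* (G × H)} (hφ : φ.IsClassPreserving) :
    (prodComm.symm.trans (φ.trans prodComm) : (H × G) ≃* (H × G)).IsClassPreserving :=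
  fun x => by simpa using (prodComm : G × H ≃* H × G).toMonoidHom.map_isConj (hφ x.swap)

variable {φ : (G × H) ≃* (G × H)}

theorem snd_apply_inl (hφ : φ.IsClassPreserving) (g : G) : (φ (g, 1)).2 = 1 :=
  isConj_one_right.mp ((MonoidHom.snd G H).map_isConj (hφ (g, 1)))

theorem apply_inl_eq (hφ : φ.IsClassPreserving) (g : G) : φ (g, 1) = ((φ (g, 1)).1, 1) :=
  Prod.ext rfl (hφ.snd_apply_inl g)

def restrictFst (hφ : φ.IsClassPreserving) : G ≃* G where
  toFun g := (φ (g, 1)).1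
  invFun g := (φ.symm (g, 1)).1
  left_inv g := by
    simp only [← hφ.apply_inl_eq, symm_apply_apply]
  right_inv g := by
    simp only [← hφ.symm.apply_inl_eq, apply_symm_apply]
  map_mul' a b := by
    simp only [← Prod.fst_mul, ← map_mul, Prod.mk_mul_mk, mul_one]

theorem apply_inl (hφ : φ.IsClassPreserving) (g : G) : φ (g, 1) = (hφ.restrictFst g, 1) :=
  hφ.apply_inl_eq g

theorem restrictFst_isClassPreserving (hφ : φ.IsClassPreserving) :
    hφ.restrictFst.IsClassPreserving :=
  fun g => (MonoidHom.fst G H).map_isConj (hφ (g, 1))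

def restrictSnd (hφ : φ.IsClassPreserving) : H ≃* H :=
  hφ.prodComm_conj.restrictFst

theorem apply_inr (hφ : φ.IsClassPreserving) (h : H) : φ (1, h) = (1, hφ.restrictSnd h) := by
  simpa [restrictSnd] using congrArg Prod.swap (hφ.prodComm_conj.apply_inl h)

theorem restrictSnd_isClassPreserving (hφ : φ.IsClassPreserving) :
    hφ.restrictSnd.IsClassPreserving :=
  hφ.prodComm_conj.restrictFst_isClassPreserving

theorem apply_eq_prodMap (hφ : φ.IsClassPreserving) (g : G) (h : H) :
    φ (g, h) = (hφ.restrictFst g, hφ.restrictSnd h) := by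
  calc φ (g, h) = φ ((g, 1) * (1, h)) := by rw [Prod.mk_mul_mk, mul_one, one_mul]
    _ = _ := by rw [map_mul, hφ.apply_inl, hφ.apply_inr, Prod.mk_mul_mk, mul_one, one_mul]

end MulEquiv.IsClassPreserving

theorem propertyA_prod (G H : Type*) [Group G] [Group H]
    (hG : HasPropertyA G) (hH : HasPropertyA H) : HasPropertyA (G × H) := by
  intro φ (hφ : φ.IsClassPreserving)
  obtain ⟨a, ha⟩ := hG _ hφ.restrictFst_isClassPreserving
  obtain ⟨b, hb⟩ := hH _ hφ.restrictSnd_isClassPreserving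
  refine ⟨(a, b), fun ⟨g, h⟩ => ?_⟩
  rw [hφ.apply_eq_prodMap, ha, hb]
  rfl
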